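/- Let F : [0,∞) → ℝ be differentiable with F(t) ≥ 0 for all t ≥ 0, and let a > 0, K ≥ 0, θ > 0 and A ≥ 1 be constants. Suppose that for every t ≥ 0 and every M ≥ A one has F′(t) ≤ −(a/M)·F(t) + K/M^{1+θ}. Then there exists a constant C > 0, depending only on F(0), K, a, θ and A, such that F(t) ≤ C·(1+t)^{−θ} for all t ≥ 0. -/

import Mathlib

/-!
Take the single value `M(t) = A + c t` with `c = a / (θ + 1)`. Then `c (θ + 1) = a` makes the
damping term cancel exactly in `d/dt [M(t)^(θ+1) F(t)] ≤ K`, so `M(t)^(θ+1) F(t) ≤ A^(θ+1) F(0) + K t`,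
and dividing by `M(t)^(θ+1) ≍ (1 + t)^(θ+1)` gives the decay `(1 + t)^(-θ)`.
-/

open Real Set

theorem sub_le_mul_sub_of_hasDerivAt_le {f f' : ℝ → ℝ} {C x₀ : ℝ}
    (hf : ∀ x ≥ x₀, HasDerivAt f (f' x) x) (hf' : ∀ x ≥ x₀, f' x ≤ C) {x : ℝ} (hx : x₀ ≤ x) :
    f x - f x₀ ≤ C * (x - x₀) := by
  refine (convex_Ici x₀).image_sub_le_mul_sub_of_deriv_le
    (fun y hy => (hf y hy).continuousAt.continuousWithinAt) (fun y hy => ?_) (fun y hy => ?_)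
    x₀ self_mem_Ici x hx hx
  · rw [interior_Ici] at hy
    exact (hf y hy.le).differentiableAt.differentiableWithinAt
  · rw [interior_Ici] at hy
    exact (hf y hy.le).deriv ▸ hf' y hy.le

theorem rpow_neg_le_of_mul_le {m s x θ : ℝ} (hm : 0 < m) (hs : 0 < s) (h : m * s ≤ x)
    (hθ : 0 ≤ θ) : x ^ (-θ) ≤ m ^ (-θ) * s ^ (-θ) := by
  rw [← mul_rpow hm.le hs.le]
  exact rpow_le_rpow_of_nonpos (mul_pos hm hs) h (neg_nonpos.2 hθ)

section WeightedEstimate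

variable {F F' : ℝ → ℝ} {a K θ A c : ℝ}

theorem hasDerivAt_affine_rpow_mul {t f' : ℝ} (hF : HasDerivAt F f' t) (hM : 0 < A + c * t) :
    HasDerivAt (fun s => (A + c * s) ^ (θ + 1) * F s)
      (c * (θ + 1) * (A + c * t) ^ θ * F t + (A + c * t) ^ (θ + 1) * f') t := by
  have hlin : HasDerivAt (fun s => A + c * s) c t := by
    simpa using ((hasDerivAt_id t).const_mul c).const_add A
  have hpow := hlin.rpow_const (p := θ + 1) (Or.inl hM.ne')
  rw [add_sub_cancel_right] at hpow
  exact (hpow.mul hF).congr_deriv (by ring)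

theorem rpow_mul_add_rpow_succ_mul_le {x y f' : ℝ} (hx : 0 < x)
    (h : f' ≤ -(a / x) * y + K / x ^ (1 + θ)) :
    a * x ^ θ * y + x ^ (θ + 1) * f' ≤ K := by
  calc a * x ^ θ * y + x ^ (θ + 1) * f'
      ≤ a * x ^ θ * y + x ^ (θ + 1) * (-(a / x) * y + K / x ^ (1 + θ)) := by gcongr
    _ = K := by
      rw [add_comm 1 θ, rpow_add_one hx.ne']
      field_simp
      ring

theorem affine_rpow_mul_le_of_diff_ineq (hderiv : ∀ t ≥ (0 : ℝ), HasDerivAt F (F' t) t)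
    (hθ : 0 < θ + 1) (ha : 0 ≤ a) (hA : 0 < A)
    (hineq : ∀ t ≥ (0 : ℝ), ∀ M ≥ A, F' t ≤ -(a / M) * F t + K / M ^ (1 + θ))
    {t : ℝ} (ht : 0 ≤ t) :
    (A + a / (θ + 1) * t) ^ (θ + 1) * F t ≤ A ^ (θ + 1) * F 0 + K * t := by
  set c := a / (θ + 1)
  have hMA : ∀ s ≥ (0 : ℝ), A ≤ A + c * s := fun s hs =>
    le_add_of_nonneg_right (mul_nonneg (div_nonneg ha hθ.le) hs)
  have key := sub_le_mul_sub_of_hasDerivAt_le (x₀ := 0) (C := K)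
    (fun s hs => hasDerivAt_affine_rpow_mul (θ := θ) (hderiv s hs) (hA.trans_le (hMA s hs)))
    (fun s hs => by
      rw [div_mul_cancel₀ a hθ.ne']
      exact rpow_mul_add_rpow_succ_mul_le (hA.trans_le (hMA s hs)) (hineq s hs _ (hMA s hs)))
    ht
  simp only [mul_zero, add_zero, sub_zero] at key
  linarith

end WeightedEstimate

theorem le_mul_rpow_neg_of_affine_rpow_mul_le {y A B K c θ t : ℝ} (hc : 0 < c) (hA : 1 ≤ A)
    (hθ : 0 ≤ θ) (hB : 0 ≤ B) (hK : 0 ≤ K) (ht : 0 ≤ t)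
    (h : (A + c * t) ^ (θ + 1) * y ≤ B + K * t) :
    y ≤ (B + K / c) * min 1 c ^ (-θ) * (1 + t) ^ (-θ) := by
  set M := A + c * t
  have hM : 0 < M := by positivity
  have hBK : B + K * t ≤ (B + K / c) * M := by
    have hKt : K / c * (c * t) = K * t := by field_simp
    have hKA : 0 ≤ K / c * A := by positivity
    have hBt : 0 ≤ B * (c * t) := by positivity
    nlinarith
  have hmM : min 1 c * (1 + t) ≤ M := by
    nlinarith [min_le_left 1 c, min_le_right 1 c]
  calc y ≤ (B + K * t) / M ^ (θ + 1) := by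
        rw [le_div_iff₀ (rpow_pos_of_pos hM _), mul_comm]; exact h
    _ ≤ (B + K / c) * M / M ^ (θ + 1) := by gcongr
    _ = (B + K / c) * M ^ (-θ) := by
        rw [rpow_add_one hM.ne', rpow_neg hM.le]; field_simp
    _ ≤ (B + K / c) * (min 1 c ^ (-θ) * (1 + t) ^ (-θ)) := by
        gcongr
        exact rpow_neg_le_of_mul_le (lt_min one_pos hc) (by linarith) hmM hθ
    _ = (B + K / c) * min 1 c ^ (-θ) * (1 + t) ^ (-θ) := by ring

/-- a family of differential inequalities
`F′(t) ≤ −(a/M) F(t) + K/M^{1+θ}` (for all `t ≥ 0` and all `M ≥ A`) for a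
nonnegative differentiable `F` yields the algebraic decay `F(t) ≤ C (1+t)^{−θ}`. -/
theorem decay_from_family_of_diff_ineq
    (F F' : ℝ → ℝ) (hderiv : ∀ t ≥ (0 : ℝ), HasDerivAt F (F' t) t)
    (hFnonneg : ∀ t ≥ (0 : ℝ), 0 ≤ F t)
    (a K θ A : ℝ) (ha : 0 < a) (hK : 0 ≤ K) (hθ : 0 < θ) (hA : 1 ≤ A)
    (hineq : ∀ t ≥ (0 : ℝ), ∀ M ≥ A, F' t ≤ -(a / M) * F t + K / M ^ (1 + θ)) :
    ∃ C > (0 : ℝ), ∀ t ≥ (0 : ℝ), F t ≤ C * (1 + t) ^ (-θ) := by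
  set c := a / (θ + 1)
  have hc : 0 < c := by positivity
  set C₀ := (A ^ (θ + 1) * F 0 + K / c) * min 1 c ^ (-θ)
  have hF0 : 0 ≤ A ^ (θ + 1) * F 0 := by have := hFnonneg 0 le_rfl; positivity
  have hC₀ : 0 ≤ C₀ := by have := lt_min one_pos hc; positivity
  refine ⟨C₀ + 1, by positivity, fun t ht => ?_⟩
  calc F t ≤ C₀ * (1 + t) ^ (-θ) :=
        le_mul_rpow_neg_of_affine_rpow_mul_le hc hA hθ.le hF0 hK ht
          (affine_rpow_mul_le_of_diff_ineq hderiv (by linarith) ha.le (by linarith) hineq ht)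
    _ ≤ (C₀ + 1) * (1 + t) ^ (-θ) := by gcongr; linarith
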